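/- For every integer k ≥ 3, the asymmetric grid instance satisfies E_{A∼p_k}[TSP(A, c_k)] ≤ 5 · k · ln k. -/

import Mathlib

/-!
Sweep the columns cyclically, round after round, taking in round `r` the `r`-th active vertex
of each column. Each step costs at most the number of columns it advances, so the tour costs at
most `k (M + 1)`, where `M` is the largest number of active vertices in a column. A union bound
over the `(t+1)`-subsets of the columns gives `P(M > t) ≤ k·C(k, t+1)·k^{-(t+1)} ≤ k / 2^t`,
hence `E[M] ≤ log₂ k + 3` and `E[TSP] ≤ k (log₂ k + 4) ≤ 5 k ln k`.
-/

noncomputable section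

/-- The cost of a tour given as a cyclic list: the sum of `c` over consecutive pairs
(cyclically). -/
def cycCost {V : Type*} (c : V → V → ℝ) (l : List V) : ℝ :=
  (List.zipWith c l (l.rotate 1)).sum

/-- `l` is a tour on the finite set `A`: a cyclic ordering of `A`, visiting each element
exactly once. -/
def IsTour {V : Type*} [DecidableEq V] (A : Finset V) (l : List V) : Prop :=
  l.Nodup ∧ l.toFinset = A

/-- The expectation of `f` over the random set of active vertices, where each vertex `v`
is active independently with probability `p v`. -/
def apExpect {V : Type*} [Fintype V] [DecidableEq V] (p : V → ℝ) (f : Finset V → ℝ) : ℝ :=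
  ∑ A : Finset V, (∏ v ∈ A, p v) * (∏ v ∈ Aᶜ, (1 - p v)) * f A

/-- The minimum cost of a tour on `A` with respect to `c`. -/
def TSP {V : Type*} [DecidableEq V] (c : V → V → ℝ) (A : Finset V) : ℝ :=
  sInf {x : ℝ | ∃ l : List V, IsTour A l ∧ x = cycCost c l}

/-- The cost function of the asymmetric grid instance on `Fin k × Fin k` (first coordinate:
row, second coordinate: column): the shortest-path metric of the digraph with a unit-cost
edge from every vertex of column `j` to every vertex of column `j+1` (cyclically). -/
def gridCost (k : ℕ) (u w : Fin k × Fin k) : ℝ :=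
  if u = w then 0
  else if u.2 = w.2 then (k : ℝ)
  else (((w.2.val + k - u.2.val) % k : ℕ) : ℝ)

open Finset

section Tours

variable {V : Type*}

lemma cycCost_nonneg {c : V → V → ℝ} (hc : ∀ u w, 0 ≤ c u w) (l : List V) :
    0 ≤ cycCost c l := by
  refine List.sum_nonneg fun x hx => ?_
  obtain ⟨i, hi, rfl⟩ := List.getElem_of_mem hx
  rw [List.getElem_zipWith]
  exact hc _ _

lemma TSP_le_cycCost [DecidableEq V] {c : V → V → ℝ} (hc : ∀ u w, 0 ≤ c u w) {A : Finset V}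
    {l : List V} (hl : IsTour A l) : TSP c A ≤ cycCost c l :=
  csInf_le ⟨0, by rintro x ⟨l', -, rfl⟩; exact cycCost_nonneg hc l'⟩ ⟨l, hl, rfl⟩

lemma exists_isTour_pairwise_lt [DecidableEq V] (A : Finset V) {g : V → ℕ}
    (hg : Set.InjOn g A) : ∃ l, IsTour A l ∧ l.Pairwise (fun u w => g u < g w) := by
  set l := A.toList.mergeSort (fun u w => decide (g u ≤ g w))
  have hperm : l.Perm A.toList := List.mergeSort_perm _ _
  have hnodup : l.Nodup := hperm.nodup_iff.mpr A.nodup_toList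
  have hmem : ∀ v, v ∈ l ↔ v ∈ A := fun v => hperm.mem_iff.trans Finset.mem_toList
  have hsorted : l.Pairwise (fun u w => decide (g u ≤ g w)) :=
    List.pairwise_mergeSort (by simp only [decide_eq_true_eq]; omega)
      (by simp only [Bool.or_eq_true, decide_eq_true_eq]; omega) _
  refine ⟨l, ⟨hnodup, Finset.ext fun v => by simp [hmem]⟩, ?_⟩
  refine (hsorted.and hnodup).imp_of_mem fun hu hw ⟨hle, hne⟩ => ?_
  simp only [decide_eq_true_eq] at hle
  exact lt_of_le_of_ne hle fun h => hne (hg ((hmem _).mp hu) ((hmem _).mp hw) h)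

/-- The path `x :: xs` followed by one last edge to `y`: the path part telescopes. -/
lemma sum_zipWith_le_of_isChain {c : V → V → ℝ} {g : V → ℝ} {B C : ℝ} {y : V}
    (hC : ∀ v, c v y ≤ C) :
    ∀ {x : V} {xs : List V}, (x :: xs).IsChain (fun u w => c u w ≤ g w - g u) →
      (∀ v ∈ x :: xs, g v ≤ B) → (List.zipWith c (x :: xs) (xs ++ [y])).sum ≤ B - g x + C
  | x, [], _, hB => by
    simpa using (hC x).trans (le_add_of_nonneg_left (sub_nonneg.mpr (hB x (by simp))))
  | x, z :: xs, hchain, hB => by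
    rw [List.isChain_cons_cons] at hchain
    have ih := sum_zipWith_le_of_isChain hC hchain.2 fun v hv => hB v (by simp [hv])
    simp only [List.cons_append, List.zipWith_cons_cons, List.sum_cons]
    linarith [hchain.1]

/-- Visit `A` in increasing order of `g`: the forward steps telescope to at most `B` and the
closing edge costs at most `C`. -/
theorem TSP_le_of_potential [DecidableEq V] {c : V → V → ℝ} (hc : ∀ u w, 0 ≤ c u w)
    {A : Finset V} {g : V → ℕ} (hg : Set.InjOn g A)
    (hstep : ∀ u w, g u < g w → c u w ≤ (g w : ℝ) - g u) {B C : ℕ} (hB : ∀ v ∈ A, g v ≤ B)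
    (hC : ∀ u w, c u w ≤ C) : TSP c A ≤ B + C := by
  obtain ⟨l, hl, hsorted⟩ := exists_isTour_pairwise_lt A hg
  refine (TSP_le_cycCost hc hl).trans ?_
  cases l with
  | nil => simp only [cycCost, List.rotate_nil, List.zipWith_nil_left, List.sum_nil]; positivity
  | cons x xs =>
    have hmem : ∀ v ∈ x :: xs, v ∈ A := fun v hv => hl.2 ▸ List.mem_toFinset.mpr hv
    have hchain := (hsorted.imp fun h => hstep _ _ h).isChain
    have := sum_zipWith_le_of_isChain (B := (B : ℝ)) (fun v => hC v x) hchain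
      fun v hv => by exact_mod_cast hB v (hmem v hv)
    rw [cycCost, List.rotate_cons_succ, List.rotate_zero]
    linarith [(g x).cast_nonneg (α := ℝ)]

end Tours

section ActivationExpectation

variable {V : Type*} [Fintype V] [DecidableEq V] (p : V → ℝ)

/-- Zeroing the factors `1 - p v`, `v ∈ S`, in `∏ (p + (1 - p)) = 1` keeps exactly the terms
of the sets `A ⊇ S`. -/
lemma apExpect_indicator_subset (S : Finset V) :
    apExpect p (fun A => if S ⊆ A then 1 else 0) = ∏ v ∈ S, p v := by
  set q : V → ℝ := fun v => if v ∈ S then 0 else 1 - p v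
  have hq : ∀ A : Finset V,
      ∏ v ∈ Aᶜ, q v = (∏ v ∈ Aᶜ, (1 - p v)) * (if S ⊆ A then 1 else 0) := by
    intro A
    split_ifs with hSA
    · rw [mul_one]
      exact prod_congr rfl fun v hv => if_neg fun hvS => mem_compl.mp hv (hSA hvS)
    · obtain ⟨v, hvS, hvA⟩ := not_subset.mp hSA
      rw [mul_zero]
      exact prod_eq_zero (mem_compl.mpr hvA) (if_pos hvS)
  calc apExpect p (fun A => if S ⊆ A then 1 else 0)
      = ∑ A : Finset V, (∏ v ∈ A, p v) * ∏ v ∈ univ \ A, q v := by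
        simp only [apExpect, ← compl_eq_univ_sdiff, hq, mul_assoc]
    _ = ∏ v, (p v + q v) := (prod_add p q univ).symm
    _ = ∏ v, if v ∈ S then p v else 1 := prod_congr rfl fun v _ => by
        by_cases hv : v ∈ S <;> simp [q, hv]
    _ = ∏ v ∈ S, p v := by rw [prod_ite_mem, univ_inter]

lemma apExpect_const (a : ℝ) : apExpect p (fun _ => a) = a := by
  have h := apExpect_indicator_subset p ∅
  simp only [empty_subset, if_true, prod_empty, apExpect, mul_one] at h
  rw [apExpect, ← sum_mul, h, one_mul]

lemma apExpect_sum {ι : Type*} (s : Finset ι) (f : ι → Finset V → ℝ) :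
    apExpect p (fun A => ∑ i ∈ s, f i A) = ∑ i ∈ s, apExpect p (f i) := by
  simp only [apExpect, mul_sum]
  exact sum_comm

lemma apExpect_mul_add (a b : ℝ) (f : Finset V → ℝ) :
    apExpect p (fun A => a * f A + b) = a * apExpect p f + b := by
  conv_rhs => rw [← apExpect_const p b]
  simp only [apExpect, mul_sum, ← sum_add_distrib]
  exact sum_congr rfl fun _ _ => by ring

variable {p}

lemma apExpect_mono (hp0 : ∀ v, 0 ≤ p v) (hp1 : ∀ v, p v ≤ 1) {f g : Finset V → ℝ}
    (h : ∀ A, f A ≤ g A) : apExpect p f ≤ apExpect p g :=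
  sum_le_sum fun A _ => mul_le_mul_of_nonneg_left (h A) <|
    mul_nonneg (prod_nonneg fun v _ => hp0 v) (prod_nonneg fun v _ => sub_nonneg.mpr (hp1 v))

end ActivationExpectation

lemma choose_mul_one_div_pow_le (n r : ℕ) :
    (n.choose (r + 1) : ℝ) * (1 / n) ^ (r + 1) ≤ (1 / 2) ^ r := by
  have hfact : (2 : ℝ) ^ r ≤ (r + 1).factorial := by
    have := @Nat.factorial_mul_pow_le_factorial 1 r
    rw [Nat.factorial_one, one_mul, add_comm 1 r] at this
    exact_mod_cast this
  calc (n.choose (r + 1) : ℝ) * (1 / n) ^ (r + 1)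
      ≤ (n : ℝ) ^ (r + 1) / (r + 1).factorial * (1 / n) ^ (r + 1) := by
        gcongr
        exact Nat.choose_le_pow_div _ _
    _ = (n / n : ℝ) ^ (r + 1) / (r + 1).factorial := by ring
    _ ≤ 1 / (r + 1).factorial := by
        gcongr
        exact pow_le_one₀ (by positivity) (div_self_le_one (n : ℝ))
    _ ≤ (1 / 2) ^ r := by
        rw [one_div_pow]
        exact one_div_le_one_div_of_le (by positivity) hfact

/-- Summing `min 1 (x / 2^t)`: the terms up to `log₂ x` contribute at most one each, and the
rest form a geometric series bounded by `2`. -/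
lemma sum_range_le_natLog_add_three {f : ℕ → ℝ} {x n : ℕ} (h1 : ∀ t, f t ≤ 1)
    (h2 : ∀ t, f t ≤ x * (1 / 2) ^ t) (hn : Nat.log 2 x < n) :
    ∑ t ∈ range n, f t ≤ Nat.log 2 x + 3 := by
  set m := Nat.log 2 x + 1
  have hhead : ∑ t ∈ range m, f t ≤ m := by
    simpa using sum_le_sum fun t (_ : t ∈ range m) => h1 t
  have htail : ∑ t ∈ Ico m n, f t ≤ 2 :=
    calc ∑ t ∈ Ico m n, f t ≤ x * ∑ t ∈ Ico m n, (1 / 2 : ℝ) ^ t := by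
          rw [mul_sum]; exact sum_le_sum fun t _ => h2 t
      _ ≤ x * ((1 / 2) ^ m / (1 - 1 / 2)) := by
          gcongr
          exact geom_sum_Ico_le_of_lt_one (by norm_num) (by norm_num)
      _ = 2 * (x / 2 ^ m) := by rw [one_div_pow]; ring
      _ ≤ 2 * 1 := by
          gcongr
          rw [div_le_one (by positivity)]
          exact_mod_cast (Nat.lt_pow_succ_log_self one_lt_two x).le
      _ = 2 := mul_one 2
  rw [← sum_range_add_sum_Ico _ hn]
  push_cast [m] at hhead
  linarith

lemma one_div_natCast_le_one (k : ℕ) : 1 / (k : ℝ) ≤ 1 :=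
  (one_div (k : ℝ)).trans_le (Nat.cast_inv_le_one k)

theorem natLog_two_add_four_le_five_mul_log {k : ℕ} (hk : 3 ≤ k) :
    (Nat.log 2 k : ℝ) + 4 ≤ 5 * Real.log k := by
  rcases Nat.lt_or_ge k 4 with h4 | h4
  · obtain rfl : k = 3 := by omega
    have hlog : Nat.log 2 3 = 1 := by
      rw [Nat.log_eq_of_pow_le_of_lt_pow] <;> norm_num
    have h1 : (1 : ℝ) < Real.log 3 := by
      rw [Real.lt_log_iff_exp_lt (by norm_num)]
      exact Real.exp_one_lt_d9.trans (by norm_num)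
    rw [hlog]
    push_cast
    linarith
  · have hL : (Nat.log 2 k : ℝ) * Real.log 2 ≤ Real.log k := by
      rw [← Real.log_pow]
      exact Real.log_le_log (by positivity) (by exact_mod_cast Nat.pow_log_le_self 2 (by omega))
    have h4' : 2 * Real.log 2 ≤ Real.log k :=
      calc 2 * Real.log 2 = Real.log (2 ^ 2) := by rw [Real.log_pow]; norm_num
        _ ≤ Real.log k := Real.log_le_log (by norm_num) (by norm_num; exact_mod_cast h4)
    nlinarith [Real.log_two_gt_d9]

namespace GridInstance

variable {k : ℕ}

lemma gridCost_nonneg (u w : Fin k × Fin k) : 0 ≤ gridCost k u w := by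
  unfold gridCost; split_ifs <;> positivity

lemma gridCost_le (u w : Fin k × Fin k) : gridCost k u w ≤ k := by
  unfold gridCost; split_ifs
  · positivity
  · rfl
  · exact_mod_cast (Nat.mod_lt _ u.2.pos).le

/-- Any positive number of unit steps that leads from the column of `u` to that of `w` bounds
the cost of `u → w`. -/
lemma gridCost_le_of_mod_eq {u w : Fin k × Fin k} {n : ℕ} (hn : 0 < n)
    (h : n % k = (w.2.val + k - u.2.val) % k) : gridCost k u w ≤ n := by
  unfold gridCost; split_ifs with huw hcol
  · positivity
  · rw [hcol, Nat.add_sub_cancel_left, Nat.mod_self] at h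
    exact_mod_cast Nat.le_of_dvd hn (Nat.dvd_of_mod_eq_zero h)
  · rw [← h]; exact_mod_cast Nat.mod_le n k

variable (A : Finset (Fin k × Fin k))

def colCard (j : Fin k) : ℕ := #{v ∈ A | v.2 = j}

def maxColCard : ℕ := univ.sup (colCard A)

def rowRank (v : Fin k × Fin k) : ℕ := #{u ∈ A | u.2 = v.2 ∧ u.1 < v.1}

/-- The position of `v` in the tour that sweeps the columns cyclically, picking up in round `r`
the `r`-th active vertex of each column. -/
def sweepPos (v : Fin k × Fin k) : ℕ := rowRank A v * k + v.2

lemma sweepPos_mod (v : Fin k × Fin k) : sweepPos A v % k = v.2 := by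
  rw [sweepPos, Nat.mul_add_mod_self_right, Nat.mod_eq_of_lt v.2.isLt]

lemma rowRank_lt_rowRank {u w : Fin k × Fin k} (hu : u ∈ A) (hcol : u.2 = w.2)
    (hrow : u.1 < w.1) : rowRank A u < rowRank A w := by
  refine card_lt_card ⟨fun x hx => ?_, fun hsub => ?_⟩
  · simp only [mem_filter] at hx ⊢
    exact ⟨hx.1, hx.2.1.trans hcol, hx.2.2.trans hrow⟩
  · have := hsub (mem_filter.mpr ⟨hu, hcol, hrow⟩)
    simp at this

lemma sweepPos_injOn : Set.InjOn (sweepPos A) A := by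
  intro u hu w hw h
  have hcol : u.2 = w.2 := Fin.ext (by rw [← sweepPos_mod A u, ← sweepPos_mod A w, h])
  have hrank : rowRank A u = rowRank A w := by
    have := u.2.pos
    simp only [sweepPos, hcol] at h
    exact Nat.eq_of_mul_eq_mul_right this (by omega)
  refine Prod.ext ?_ hcol
  rcases lt_trichotomy u.1 w.1 with hrow | hrow | hrow
  · exact absurd hrank (rowRank_lt_rowRank A hu hcol hrow).ne
  · exact hrow
  · exact absurd hrank.symm (rowRank_lt_rowRank A hw hcol.symm hrow).ne

lemma gridCost_le_sweepPos_sub {u w : Fin k × Fin k} (h : sweepPos A u < sweepPos A w) :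
    gridCost k u w ≤ (sweepPos A w : ℝ) - sweepPos A u := by
  rw [← Nat.cast_sub h.le]
  refine gridCost_le_of_mod_eq (Nat.sub_pos_of_lt h) (Nat.ModEq.add_right_cancel' u.2.val ?_)
  have hu := sweepPos_mod A u
  have hw := sweepPos_mod A w
  have hk : (w.2.val + k - u.2.val + u.2.val) % k = w.2.val % k := by
    rw [Nat.sub_add_cancel (by omega), Nat.add_mod_right]
  unfold Nat.ModEq
  rw [hk, ← hu, Nat.add_mod_mod, Nat.sub_add_cancel h.le, hw, Nat.mod_eq_of_lt w.2.isLt]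

lemma sweepPos_lt {v : Fin k × Fin k} (hv : v ∈ A) : sweepPos A v < maxColCard A * k := by
  have hrank : rowRank A v < colCard A v.2 := by
    refine card_lt_card ⟨fun x hx => ?_, fun hsub => ?_⟩
    · simp only [mem_filter] at hx ⊢
      exact ⟨hx.1, hx.2.1⟩
    · have := hsub (mem_filter.mpr ⟨hv, rfl⟩)
      simp at this
  have := Nat.mul_le_mul_right k (hrank.trans_le (le_sup (mem_univ v.2)))
  rw [Nat.succ_mul] at this
  unfold sweepPos maxColCard
  omega

theorem TSP_gridCost_le : TSP (gridCost k) A ≤ k * (maxColCard A + 1) := by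
  have := TSP_le_of_potential gridCost_nonneg (sweepPos_injOn A)
    (fun _ _ => gridCost_le_sweepPos_sub A) (B := maxColCard A * k)
    (fun v hv => (sweepPos_lt A hv).le) gridCost_le
  push_cast at this
  linarith

lemma card_column (j : Fin k) : #{v : Fin k × Fin k | v.2 = j} = k := by
  have : ({v : Fin k × Fin k | v.2 = j} : Finset _) = univ ×ˢ {j} := by ext ⟨a, b⟩; simp [eq_comm]
  simp [this]

lemma maxColCard_le : maxColCard A ≤ k :=
  Finset.sup_le fun _ _ => (card_le_card (filter_subset_filter _ (subset_univ A))).trans_eq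
    (card_column _)

/-- Union bound over the `(t+1)`-subsets of the columns. -/
lemma apExpect_lt_maxColCard_le (t : ℕ) :
    apExpect (fun _ : Fin k × Fin k => 1 / (k : ℝ)) (fun A => if t < maxColCard A then 1 else 0)
      ≤ k * k.choose (t + 1) * (1 / k) ^ (t + 1) := by
  have hcover : ∀ A : Finset (Fin k × Fin k), (if t < maxColCard A then (1 : ℝ) else 0) ≤
      ∑ j, ∑ S ∈ powersetCard (t + 1) {v : Fin k × Fin k | v.2 = j},
        if S ⊆ A then 1 else 0 := by
    intro A
    split_ifs with h
    · obtain ⟨j, -, hj⟩ := Finset.lt_sup_iff.mp h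
      obtain ⟨S, hS, hcard⟩ := exists_subset_card_eq (Nat.succ_le_of_lt hj)
      have hSj : S ∈ powersetCard (t + 1) {v : Fin k × Fin k | v.2 = j} :=
        mem_powersetCard.mpr ⟨fun v hv => by simpa using (mem_filter.mp (hS hv)).2, hcard⟩
      have hSA : (if S ⊆ A then (1 : ℝ) else 0) = 1 := if_pos (hS.trans (filter_subset _ A))
      refine hSA.symm.le.trans ((single_le_sum (f := fun S => if S ⊆ A then (1 : ℝ) else 0)
        (fun _ _ => by positivity) hSj).trans ?_)
      exact single_le_sum (f := fun j => ∑ S ∈ powersetCard (t + 1)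
        {v : Fin k × Fin k | v.2 = j}, if S ⊆ A then (1 : ℝ) else 0)
        (fun _ _ => sum_nonneg fun _ _ => by positivity) (mem_univ j)
    · exact sum_nonneg fun _ _ => sum_nonneg fun _ _ => by positivity
  refine (apExpect_mono (fun _ => by positivity) (fun _ => one_div_natCast_le_one k) hcover).trans_eq ?_
  simp only [apExpect_sum, apExpect_indicator_subset, prod_const]
  rw [sum_congr rfl fun j _ => sum_congr rfl fun S hS => by rw [(mem_powersetCard.mp hS).2]]
  simp only [sum_const, card_powersetCard, card_column, card_univ, Fintype.card_fin, nsmul_eq_mul]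
  ring

lemma apExpect_maxColCard_le (hk : k ≠ 0) :
    apExpect (fun _ : Fin k × Fin k => 1 / (k : ℝ)) (fun A => (maxColCard A : ℝ))
      ≤ Nat.log 2 k + 3 := by
  have hlayer : ∀ A : Finset (Fin k × Fin k),
      (maxColCard A : ℝ) = ∑ t ∈ range k, if t < maxColCard A then 1 else 0 := by
    intro A
    have hle := maxColCard_le A
    have : {t ∈ range k | t < maxColCard A} = range (maxColCard A) := by
      ext t; simp only [mem_filter, mem_range]; omega
    rw [sum_boole, this, card_range]
  simp only [hlayer, apExpect_sum]
  refine sum_range_le_natLog_add_three (fun t => ?_) (fun t => ?_) (Nat.log_lt_self 2 hk)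
  · exact (apExpect_mono (fun _ => by positivity) (fun _ => one_div_natCast_le_one k) fun A => by split_ifs <;> norm_num).trans_eq
      (apExpect_const _ 1)
  · refine (apExpect_lt_maxColCard_le t).trans ?_
    rw [mul_assoc]
    gcongr
    exact choose_mul_one_div_pow_le k t

end GridInstance

/-- on the asymmetric grid instance with `k ≥ 3`, the expected cost of an
optimal a posteriori tour is at most `5·k·ln k`. -/
theorem statement5 (k : ℕ) (hk : 3 ≤ k) :
    apExpect (fun _ : Fin k × Fin k => 1 / (k : ℝ)) (fun A => TSP (gridCost k) A) ≤
      5 * (k : ℝ) * Real.log k := by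
  open GridInstance in
  calc apExpect (fun _ : Fin k × Fin k => 1 / (k : ℝ)) (fun A => TSP (gridCost k) A)
      ≤ apExpect (fun _ : Fin k × Fin k => 1 / (k : ℝ)) (fun A => k * (maxColCard A : ℝ) + k) :=
        apExpect_mono (fun _ => by positivity) (fun _ => one_div_natCast_le_one k) fun A =>
          (TSP_gridCost_le A).trans_eq (by ring)
    _ = k * apExpect (fun _ : Fin k × Fin k => 1 / (k : ℝ)) (fun A => (maxColCard A : ℝ)) + k :=
        apExpect_mul_add _ _ _ _
    _ ≤ k * (Nat.log 2 k + 3) + k := by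
        gcongr
        exact apExpect_maxColCard_le (by omega)
    _ ≤ 5 * k * Real.log k := by
        nlinarith [natLog_two_add_four_le_five_mul_log hk, (k.cast_nonneg : (0 : ℝ) ≤ k)]

end
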